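/- Let H be a complex Hilbert space and let a, b : H → H be continuous linear operators with parametrices p and q respectively, and let r be any parametrix of the composite b∘a. Then [b∘a, r] − [a, p] − [b, q] lies in [F(H), F(H)]; that is, the assignment a ↦ class of [a,p] in F(H)/[F(H),F(H)] is additive under composition of Fredholm operators. -/

import Mathlib

/-- A continuous linear map is of finite rank if its range is finite dimensional. -/
def FiniteRank {V W : Type*} [NormedAddCommGroup V] [NormedSpace ℂ V]
    [NormedAddCommGroup W] [NormedSpace ℂ W] (T : V →L[ℂ] W) : Prop :=
  FiniteDimensional ℂ (LinearMap.range (T : V →ₗ[ℂ] W))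

/-- `[F(V), F(V)]`: the additive subgroup of the continuous endomorphisms of `V`
generated by commutators of finite-rank operators. -/
noncomputable def frCommutators (V : Type*) [NormedAddCommGroup V] [NormedSpace ℂ V] :
    AddSubgroup (V →L[ℂ] V) :=
  AddSubgroup.closure
    {C | ∃ A B : V →L[ℂ] V, FiniteRank A ∧ FiniteRank B ∧ C = A.comp B - B.comp A}

/-- `p` is a parametrix for `a`: `a∘p - id` and `p∘a - id` are finite rank. -/
def IsParametrix {H : Type*} [NormedAddCommGroup H] [NormedSpace ℂ H]
    (a p : H →L[ℂ] H) : Prop :=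
  FiniteRank (a.comp p - ContinuousLinearMap.id ℂ H) ∧
    FiniteRank (p.comp a - ContinuousLinearMap.id ℂ H)

/-!
Finite-rank operators form a two-sided ideal `F`, modulo which a parametrix is an inverse: so a
parametrix is unique modulo `F`, and `p * q` is a parametrix of `b * a`. On a Hilbert space every
finite-rank `f` has a finite-rank two-sided unit `e`, the orthogonal projection onto
`range f ⊔ (ker f)ᗮ`; then `[f, x] = [f, e x + x e - e x e]` lies in `[F, F]` for every `x`.
Hence changing the parametrix only changes `[a, p]` by an element of `[F, F]`, and for the
parametrix `p q` of `b a`, writing `s = a p - 1` and `v = q b - 1`,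
`[b a, p q] - [a, p] - [b, q] = [b s, q] - [p v, a] + [v, s]`.
-/

open LinearMap LinearMap.FiniteRangeSetoid

section

variable {U V W : Type*} [NormedAddCommGroup U] [NormedSpace ℂ U]
  [NormedAddCommGroup V] [NormedSpace ℂ V] [NormedAddCommGroup W] [NormedSpace ℂ W]

theorem finiteRank_iff_hasFiniteRange {T : V →L[ℂ] W} :
    FiniteRank T ↔ (T : V →ₗ[ℂ] W).HasFiniteRange :=
  Module.Finite.iff_fg

namespace FiniteRank

theorem comp_left {f : U →L[ℂ] V} (hf : FiniteRank f) (g : V →L[ℂ] W) :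
    FiniteRank (g.comp f) :=
  finiteRank_iff_hasFiniteRange.2 ((finiteRank_iff_hasFiniteRange.1 hf).comp_left _)

theorem comp_right {g : V →L[ℂ] W} (hg : FiniteRank g) (f : U →L[ℂ] V) :
    FiniteRank (g.comp f) :=
  finiteRank_iff_hasFiniteRange.2 ((finiteRank_iff_hasFiniteRange.1 hg).comp_right _)

theorem add {f g : V →L[ℂ] W} (hf : FiniteRank f) (hg : FiniteRank g) : FiniteRank (f + g) :=
  finiteRank_iff_hasFiniteRange.2
    ((finiteRank_iff_hasFiniteRange.1 hf).add (finiteRank_iff_hasFiniteRange.1 hg))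

theorem sub {f g : V →L[ℂ] W} (hf : FiniteRank f) (hg : FiniteRank g) : FiniteRank (f - g) :=
  finiteRank_iff_hasFiniteRange.2
    ((finiteRank_iff_hasFiniteRange.1 hf).sub (finiteRank_iff_hasFiniteRange.1 hg))

end FiniteRank

end

namespace IsParametrix

variable {H : Type*} [NormedAddCommGroup H] [NormedSpace ℂ H] {a b p p' q : H →L[ℂ] H}

theorem iff_isQuasiInverse : IsParametrix a p ↔ (a : H →ₗ[ℂ] H).IsQuasiInverse p :=
  and_congr (finiteRank_iff_hasFiniteRange.trans equiv_iff_hasFiniteRange.symm)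
    (finiteRank_iff_hasFiniteRange.trans equiv_iff_hasFiniteRange.symm)

theorem comp (ha : IsParametrix a p) (hb : IsParametrix b q) :
    IsParametrix (b * a) (p * q) :=
  iff_isQuasiInverse.2
    ((iff_isQuasiInverse.1 ha).symm.comp (iff_isQuasiInverse.1 hb).symm).symm

theorem finiteRank_sub (hp : IsParametrix a p) (hp' : IsParametrix a p') :
    FiniteRank (p - p') :=
  finiteRank_iff_hasFiniteRange.2 <| equiv_iff_hasFiniteRange.1 <|
    (iff_isQuasiInverse.1 hp).equiv_of_left (iff_isQuasiInverse.1 hp') (Setoid.refl _)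

end IsParametrix

section Hilbert

variable {H : Type*} [NormedAddCommGroup H] [InnerProductSpace ℂ H] [CompleteSpace H]

theorem FiniteRank.finiteDimensional_orthogonal_ker {V : Type*} [NormedAddCommGroup V]
    [NormedSpace ℂ V] {f : H →L[ℂ] V} (hf : FiniteRank f) :
    FiniteDimensional ℂ (ker (f : H →ₗ[ℂ] V))ᗮ :=
  have : FiniteDimensional ℂ (range (f : H →ₗ[ℂ] V)) := hf
  (((ker (f : H →ₗ[ℂ] V)).quotientEquivOfIsCompl _
    (Submodule.isCompl_orthogonal _)).symm.trans
      (f : H →ₗ[ℂ] V).quotKerEquivRange).symm.finiteDimensional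

theorem FiniteRank.exists_local_unit {f : H →L[ℂ] H} (hf : FiniteRank f) :
    ∃ e : H →L[ℂ] H, FiniteRank e ∧ e * f = f ∧ f * e = f := by
  have : FiniteDimensional ℂ (range (f : H →ₗ[ℂ] H)) := hf
  have := hf.finiteDimensional_orthogonal_ker
  set W := range (f : H →ₗ[ℂ] H) ⊔ (ker (f : H →ₗ[ℂ] H))ᗮ
  refine ⟨W.starProjection, ?_, ?_, ?_⟩
  · show FiniteDimensional ℂ (range _)
    rw [Submodule.range_starProjection]
    infer_instance
  · ext x
    exact W.starProjection_eq_self_iff.2 (Submodule.mem_sup_left (mem_range_self _ x))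
  · ext x
    have hker : f (x - W.starProjection x) = 0 := (ker _).orthogonal_orthogonal.le
      (Submodule.orthogonal_le le_sup_right (W.sub_starProjection_mem_orthogonal x))
    rw [map_sub, sub_eq_zero] at hker
    exact hker.symm

theorem FiniteRank.commutator_mem_frCommutators {f : H →L[ℂ] H} (hf : FiniteRank f)
    (x : H →L[ℂ] H) : f * x - x * f ∈ frCommutators H := by
  obtain ⟨e, he, hef, hfe⟩ := hf.exists_local_unit
  set g := e * x + x * e - e * x * e
  have hg : FiniteRank g :=
    ((he.comp_right x).add (he.comp_left x)).sub ((he.comp_right x).comp_right e)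
  have hfg : f * g = f * x := by
    simp only [g, mul_sub, mul_add, ← mul_assoc, hfe]
    abel
  have hgf : g * f = x * f := by
    simp only [g, sub_mul, add_mul, mul_assoc, hef]
    abel
  rw [← hfg, ← hgf]
  exact AddSubgroup.subset_closure ⟨f, g, hf, hg, rfl⟩

theorem IsParametrix.commutator_sub_commutator_mem {a p p' : H →L[ℂ] H}
    (hp : IsParametrix a p) (hp' : IsParametrix a p') :
    (a * p - p * a) - (a * p' - p' * a) ∈ frCommutators H := by
  convert neg_mem ((hp.finiteRank_sub hp').commutator_mem_frCommutators a) using 1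
  noncomm_ring

theorem commutator_mul_sub_commutator_sub_commutator_mem {a b p q : H →L[ℂ] H}
    (hap : FiniteRank (a * p - 1)) (hqb : FiniteRank (q * b - 1)) :
    ((b * a) * (p * q) - (p * q) * (b * a)) - (a * p - p * a) - (b * q - q * b)
      ∈ frCommutators H := by
  set s := a * p - 1 with hs
  set v := q * b - 1 with hv
  have key : ((b * a) * (p * q) - (p * q) * (b * a)) - (a * p - p * a) - (b * q - q * b)
      = ((b * s) * q - q * (b * s)) - ((p * v) * a - a * (p * v)) + (v * s - s * v) := by
    rw [hs, hv]
    noncomm_ring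
  rw [key]
  exact add_mem (sub_mem ((hap.comp_left b).commutator_mem_frCommutators q)
    ((hqb.comp_left p).commutator_mem_frCommutators a)) (hqb.commutator_mem_frCommutators s)

end Hilbert

theorem stmt6 {H : Type*} [NormedAddCommGroup H] [InnerProductSpace ℂ H] [CompleteSpace H]
    (a b p q r : H →L[ℂ] H)
    (hp : IsParametrix a p) (hq : IsParametrix b q) (hr : IsParametrix (b.comp a) r) :
    ((b.comp a).comp r - r.comp (b.comp a)) - (a.comp p - p.comp a) -
        (b.comp q - q.comp b) ∈ frCommutators H := by
  change ((b * a) * r - r * (b * a)) - (a * p - p * a) - (b * q - q * b) ∈ frCommutators H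
  have hchange : ((b * a) * r - r * (b * a)) - ((b * a) * (p * q) - (p * q) * (b * a))
      ∈ frCommutators H := hr.commutator_sub_commutator_mem (hp.comp hq)
  have hcomp := commutator_mul_sub_commutator_sub_commutator_mem hp.1 hq.2
  convert add_mem hchange hcomp using 1
  abel
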